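/- Let G be an r-SPTG in which every non-final location is urgent. For every location ℓ and every ν ∈ [0,r], if Val_G(ℓ,ν) is finite then there exists f ∈ F_G such that Val_G(ℓ,ν) = f(ν). -/

import Mathlib

/-!
Common formalization of one-clock priced timed games (PTGs), following
"Simple Priced Timed Games are not That Simple".
-/

namespace PTGPaper

/-- The three kinds of locations: locations of player Min, of player Max, and final locations. -/
inductive Owner : Type
  | min : Owner
  | max : Owner
  | final : Owner
deriving DecidableEq

/-- A transition of a one-clock priced timed game: a source location, a guard
(an interval with endpoints `lo`, `hi`, with openness flags `loOpen`, `hiOpen`),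
a reset flag, a discrete price, and a target location. -/
structure PTrans (L : Type) where
  src : L
  lo : ℝ
  hi : ℝ
  loOpen : Bool
  hiOpen : Bool
  reset : Bool
  price : ℤ
  tgt : L

noncomputable instance {L : Type} : DecidableEq (PTrans L) := Classical.decEq _

/-- Membership of a clock value in the guard of a transition. -/
def PTrans.memGuard {L : Type} (δ : PTrans L) (ν : ℝ) : Prop :=
  (if δ.loOpen then δ.lo < ν else δ.lo ≤ ν) ∧
  (if δ.hiOpen then ν < δ.hi else ν ≤ δ.hi)

/-- A one-clock priced timed game. -/
structure PTG where
  Loc : Type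
  locFin : Fintype Loc
  locDec : DecidableEq Loc
  owner : Loc → Owner
  urgent : Loc → Bool
  M : ℕ
  trans : Finset (PTrans Loc)
  price : Loc → ℤ
  fcost : Loc → ℝ → ℝ

attribute [instance] PTG.locFin PTG.locDec

/-- A configuration: a location together with a clock valuation. -/
abbrev PTG.Config (G : PTG) := G.Loc × ℝ

/-- `G.Move s s' t δ c` holds if from configuration `s`, waiting `t` time units and then
taking transition `δ` is legal, leads to configuration `s'` and costs `c`. -/
def PTG.Move (G : PTG) (s s' : G.Config) (t : ℝ) (δ : PTrans G.Loc) (c : ℝ) : Prop :=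
  δ ∈ G.trans ∧ δ.src = s.1 ∧ 0 ≤ t ∧ (G.urgent s.1 = true → t = 0) ∧
  δ.memGuard (s.2 + t) ∧ s'.1 = δ.tgt ∧
  s'.2 = (if δ.reset then 0 else s.2 + t) ∧
  c = (δ.price : ℝ) + t * (G.price s.1 : ℝ)

/-- A finite play (history): an initial configuration followed by a list of steps,
each step consisting of a delay, the transition taken, and the configuration reached. -/
structure Hist (L : Type) where
  start : L × ℝ
  steps : List (ℝ × PTrans L × (L × ℝ))

namespace Hist

variable {L : Type}

def lastFrom (s : L × ℝ) : List (ℝ × PTrans L × (L × ℝ)) → L × ℝ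
  | [] => s
  | (_, _, s') :: rest => lastFrom s' rest

/-- The last configuration of a finite play. -/
def last (h : Hist L) : L × ℝ := lastFrom h.start h.steps

def costFrom (π : L → ℤ) (s : L × ℝ) : List (ℝ × PTrans L × (L × ℝ)) → ℝ
  | [] => 0
  | (t, δ, s') :: rest => ((δ.price : ℝ) + t * (π s.1 : ℝ)) + costFrom π s' rest

/-- The sum of the prices of the discrete transitions along a finite play. -/
def discSum (h : Hist L) : ℤ := (h.steps.map (fun st => st.2.1.price)).sum

/-- The prefix of a finite play consisting of its first `i` steps. -/
def take (h : Hist L) (i : ℕ) : Hist L := ⟨h.start, h.steps.take i⟩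

end Hist

/-- Validity of a sequence of steps, starting from a given configuration. -/
def PTG.ValidFrom (G : PTG) : G.Config → List (ℝ × PTrans G.Loc × G.Config) → Prop
  | _, [] => True
  | s, (t, δ, s') :: rest => (∃ c, G.Move s s' t δ c) ∧ G.ValidFrom s' rest

/-- A valid finite play of `G`. -/
def PTG.HistValid (G : PTG) (h : Hist G.Loc) : Prop :=
  0 ≤ h.start.2 ∧ h.start.2 ≤ (G.M : ℝ) ∧ G.ValidFrom h.start h.steps

/-- Accumulated cost of the moves of a finite play (without any final cost). -/
def PTG.accCost (G : PTG) (h : Hist G.Loc) : ℝ := Hist.costFrom G.price h.start h.steps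

/-- A (deterministic) strategy, given as a function from finite plays to
a pair (delay, transition). -/
abbrev StratFun (L : Type) := Hist L → ℝ × PTrans L

/-- A finite play is consistent with strategy `σ` of the player owning locations of kind `P`
if at every step taken from a location of that player, the move is the one prescribed
by `σ` on the corresponding prefix. -/
def PTG.Consistent (G : PTG) (P : Owner) (σ : StratFun G.Loc) (h : Hist G.Loc) : Prop :=
  ∀ (i : ℕ) (hi : i < h.steps.length),
    G.owner (h.take i).last.1 = P →
    ((h.steps.get ⟨i, hi⟩).1, (h.steps.get ⟨i, hi⟩).2.1) = σ (h.take i)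

/-- A strategy of the player owning the locations of kind `P` is valid if it proposes
a legal move after every valid finite play ending in a location of that player. -/
def PTG.StratValid (G : PTG) (P : Owner) (σ : StratFun G.Loc) : Prop :=
  ∀ h : Hist G.Loc, G.HistValid h → G.owner h.last.1 = P →
    ∃ s' c, G.Move h.last s' (σ h).1 (σ h).2 c

def PTG.MinValid (G : PTG) (σ : StratFun G.Loc) : Prop := G.StratValid Owner.min σ

def PTG.MaxValid (G : PTG) (τ : StratFun G.Loc) : Prop := G.StratValid Owner.max τ

/-- The configuration reached from `s` by the move `td = (delay, transition)`. -/
def PTG.nextCfg (G : PTG) (s : G.Config) (td : ℝ × PTrans G.Loc) : G.Config :=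
  (td.2.tgt, if td.2.reset then 0 else s.2 + td.1)

/-- The finite play of length (at most) `n` obtained from initial configuration `s₀` when
Min plays `σ` and Max plays `τ` (the play stops growing when a final location is reached). -/
def PTG.histOf (G : PTG) (σ τ : StratFun G.Loc) (s₀ : G.Config) : ℕ → Hist G.Loc
  | 0 => ⟨s₀, []⟩
  | n + 1 =>
    let h := G.histOf σ τ s₀ n
    if G.owner h.last.1 = Owner.final then h
    else
      let td := if G.owner h.last.1 = Owner.min then σ h else τ h
      ⟨h.start, h.steps ++ [(td.1, td.2, G.nextCfg h.last td)]⟩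

open Classical in
/-- The cost of the play from `s₀` determined by the profile `(σ, τ)`: `+∞` if no final
location is ever reached, and otherwise the accumulated cost up to the first visit of a
final location, plus the final cost function of that location evaluated at the current
clock value. -/
noncomputable def PTG.playCost (G : PTG) (σ τ : StratFun G.Loc) (s₀ : G.Config) : EReal :=
  if hx : ∃ n, G.owner ((G.histOf σ τ s₀ n).last.1) = Owner.final then
    (((G.accCost (G.histOf σ τ s₀ (Nat.find hx)) +
        G.fcost ((G.histOf σ τ s₀ (Nat.find hx)).last.1)
          ((G.histOf σ τ s₀ (Nat.find hx)).last.2)) : ℝ) : EReal)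
  else ⊤

/-- `Val^σ(s)`, the value of a Min strategy `σ`. -/
noncomputable def PTG.minValue (G : PTG) (σ : StratFun G.Loc) (s : G.Config) : EReal :=
  ⨆ τ : {τ : StratFun G.Loc // G.MaxValid τ}, G.playCost σ τ.1 s

/-- `Val^τ(s)`, the value of a Max strategy `τ`. -/
noncomputable def PTG.maxValue (G : PTG) (τ : StratFun G.Loc) (s : G.Config) : EReal :=
  ⨅ σ : {σ : StratFun G.Loc // G.MinValid σ}, G.playCost σ.1 τ s

/-- The upper value of the game. -/
noncomputable def PTG.uval (G : PTG) (s : G.Config) : EReal :=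
  ⨅ σ : {σ : StratFun G.Loc // G.MinValid σ}, G.minValue σ.1 s

/-- The lower value of the game. -/
noncomputable def PTG.lval (G : PTG) (s : G.Config) : EReal :=
  ⨆ τ : {τ : StratFun G.Loc // G.MaxValid τ}, G.maxValue τ.1 s

/-- The value of the game (games are determined, so this coincides with the upper value). -/
noncomputable def PTG.val (G : PTG) (s : G.Config) : EReal := G.lval s

/-- The fake value of a Min strategy `σ` at configuration `s`: the supremum of the costs of
the plays consistent with `σ` from `s` that do reach a final location. -/
noncomputable def PTG.fakeVal (G : PTG) (σ : StratFun G.Loc) (s : G.Config) : EReal :=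
  sSup {x : EReal | ∃ h : Hist G.Loc, h.start = s ∧ G.HistValid h ∧
    G.Consistent Owner.min σ h ∧ G.owner h.last.1 = Owner.final ∧
    x = (((G.accCost h + G.fcost h.last.1 h.last.2) : ℝ) : EReal)}

/-- Well-formedness of a PTG: transitions leave non-final locations only, guards are
contained in `[0, M]`, urgent locations are non-final, final cost functions are affine with
rational coefficients, and the game is deadlock-free. -/
def PTG.WF (G : PTG) : Prop :=
  (∀ δ ∈ G.trans, G.owner δ.src ≠ Owner.final) ∧
  (∀ δ ∈ G.trans, 0 ≤ δ.lo ∧ δ.hi ≤ (G.M : ℝ)) ∧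
  (∀ ℓ, G.urgent ℓ = true → G.owner ℓ ≠ Owner.final) ∧
  (∀ ℓ, G.owner ℓ = Owner.final → ∃ a b : ℚ, ∀ ν : ℝ, G.fcost ℓ ν = (a : ℝ) * ν + (b : ℝ)) ∧
  (∀ (ℓ : G.Loc) (ν : ℝ), G.owner ℓ ≠ Owner.final → 0 ≤ ν → ν ≤ (G.M : ℝ) →
    ∃ s' t δ c, G.Move (ℓ, ν) s' t δ c)

/-- All guards have natural-number endpoints. -/
def PTG.NatEndpoints (G : PTG) : Prop :=
  ∀ δ ∈ G.trans, (∃ n : ℕ, δ.lo = (n : ℝ)) ∧ ∃ n : ℕ, δ.hi = (n : ℝ)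

/-- `P_T`: the largest absolute value of a transition price. -/
def PTG.PT (G : PTG) : ℕ := G.trans.sup fun δ => δ.price.natAbs

/-- `P_L`: the largest absolute value of a location price-rate. -/
def PTG.PL (G : PTG) : ℕ := Finset.univ.sup fun ℓ : G.Loc => (G.price ℓ).natAbs

/-- `P_f`: the largest absolute value taken by a final cost function on `[0, r]`. -/
noncomputable def PTG.Pf (G : PTG) (r : ℝ) : ℝ :=
  sSup {x : ℝ | ∃ (ℓ : G.Loc) (ν : ℝ), G.owner ℓ = Owner.final ∧ 0 ≤ ν ∧ ν ≤ r ∧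
    x = |G.fcost ℓ ν|}

/-- The number of locations `|L|`. -/
def PTG.nLoc (G : PTG) : ℕ := Fintype.card G.Loc

/-- The number of final locations `|L_f|`. -/
def PTG.nFin (G : PTG) : ℕ :=
  (Finset.univ.filter fun ℓ : G.Loc => G.owner ℓ = Owner.final).card

/-- A measure of the size of `G` (locations, transitions, and binary encodings of
the numerical constants). -/
def PTG.size (G : PTG) : ℕ :=
  G.nLoc + G.trans.card + Nat.log2 (G.M + 2) + Nat.log2 (G.PT + 2) + Nat.log2 (G.PL + 2) + 2

/-- `G` is an `r`-SPTG: every transition has guard `[0, r]` and performs no reset. -/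
def PTG.IsSPTG (G : PTG) (r : ℝ) : Prop :=
  0 ≤ r ∧ r ≤ 1 ∧ ∀ δ ∈ G.trans,
    δ.lo = 0 ∧ δ.hi = r ∧ δ.loOpen = false ∧ δ.hiOpen = false ∧ δ.reset = false

/-- The left end of the `i`-th interval determined by the points `pt` (with the convention
`ν₀ = min 0 (pt 0)`). -/
def prevPt {k : ℕ} (pt : Fin (k + 1) → ℝ) (i : Fin (k + 1)) : ℝ :=
  if (i : ℕ) = 0 then min 0 (pt 0) else
    pt ⟨(i : ℕ) - 1, lt_of_le_of_lt (Nat.sub_le _ _) i.isLt⟩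

/-- A finite positional (FP) strategy of the player owning locations of kind `P` in an
`r`-SPTG: a memoryless strategy which, on each location of that player, is described by
finitely many rational threshold points `0 ≤ ν₁ < ⋯ < ν_k = r` and transitions
`δ₁, …, δ_k`, and on each induced interval either always plays immediately
or always waits until the right endpoint of the interval. -/
structure FPStrat (G : PTG) (r : ℝ) (P : Owner) where
  strat : StratFun G.Loc
  valid : G.StratValid P strat
  memoryless : ∀ h h' : Hist G.Loc, G.HistValid h → G.HistValid h' →
    h.last = h'.last → strat h = strat h'
  points : Finset ℝ
  points_rat : ∀ p ∈ points, ∃ q : ℚ, p = (q : ℝ)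
  points_mem : ∀ p ∈ points, 0 ≤ p ∧ p ≤ r
  r_mem : r ∈ points
  piecewise : ∀ ℓ : G.Loc, G.owner ℓ = P →
    ∃ (k : ℕ) (pt : Fin (k + 1) → ℝ) (δ : Fin (k + 1) → PTrans G.Loc),
      StrictMono pt ∧ 0 ≤ pt 0 ∧ pt (Fin.last k) = r ∧ (∀ i, pt i ∈ points) ∧
      (∀ i : Fin (k + 1),
        (∀ ν : ℝ, prevPt pt i < ν → ν ≤ pt i → strat ⟨(ℓ, ν), []⟩ = (0, δ i)) ∨
        (∀ ν : ℝ, prevPt pt i < ν → ν ≤ pt i → strat ⟨(ℓ, ν), []⟩ = (pt i - ν, δ i))) ∧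
      (0 < pt 0 → strat ⟨(ℓ, 0), []⟩ = (pt 0, δ 0))

/-- The size `|σ|` of an FP strategy: the number of intervals generated by its points. -/
def FPStrat.size {G : PTG} {r : ℝ} {P : Owner} (σ : FPStrat G r P) : ℕ := σ.points.card

/-- Two clock values lie in the same interval of the partition induced by `pts`
(intervals being half-open to the left). -/
def SameInterval (pts : Finset ℝ) (ν ν' : ℝ) : Prop := ∀ p ∈ pts, (ν ≤ p ↔ ν' ≤ p)

/-- A negative cycle (NC) strategy of Min: an FP strategy such that along every consistent
finite play which starts and ends in the same location, with both clock values in the same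
interval of the strategy, the sum of the prices of the discrete transitions is at most −1. -/
def FPStrat.IsNC {G : PTG} {r : ℝ} (σ : FPStrat G r Owner.min) : Prop :=
  ∀ h : Hist G.Loc, G.HistValid h → G.Consistent Owner.min σ.strat h →
    h.steps ≠ [] → h.last.1 = h.start.1 → SameInterval σ.points h.start.2 h.last.2 →
    h.discSum ≤ -1

/-- A fake-optimal Min strategy: its fake value equals the value of the game everywhere. -/
def FPStrat.FakeOpt {G : PTG} {r : ℝ} (σ : FPStrat G r Owner.min) : Prop :=
  ∀ (ℓ : G.Loc) (ν : ℝ), 0 ≤ ν → ν ≤ r → G.fakeVal σ.strat (ℓ, ν) = G.val (ℓ, ν)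

/-- An optimal Max FP strategy: its value equals the value of the game everywhere. -/
def FPStrat.Opt {G : PTG} {r : ℝ} (τ : FPStrat G r Owner.max) : Prop :=
  ∀ (ℓ : G.Loc) (ν : ℝ), 0 ≤ ν → ν ≤ r → G.maxValue τ.strat (ℓ, ν) = G.val (ℓ, ν)

/-- A cost function on `[0, r]`: either infinite, or continuous piecewise affine with
finitely many cutpoints, all cutpoints and the values at them being rational. -/
def IsCostFunctionOn (r : ℝ) (f : ℝ → EReal) : Prop :=
  (∀ ν : ℝ, 0 ≤ ν → ν ≤ r → f ν = ⊤) ∨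
  (∀ ν : ℝ, 0 ≤ ν → ν ≤ r → f ν = ⊥) ∨
  ∃ (n : ℕ) (a : Fin (n + 1) → ℚ),
    Monotone a ∧ ((a 0 : ℝ) = 0) ∧ ((a (Fin.last n) : ℝ) = r) ∧
    (∀ i, ∃ q : ℚ, f ((a i : ℚ) : ℝ) = ((q : ℝ) : EReal)) ∧
    ∀ i : Fin n, ∃ α β : ℝ, ∀ ν : ℝ, ((a i.castSucc : ℚ) : ℝ) ≤ ν → ν ≤ ((a i.succ : ℚ) : ℝ) →
      f ν = ((α * ν + β : ℝ) : EReal)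

/-- An `r`-SPTG is finitely optimal if Min has a fake-optimal NC strategy, Max has an optimal
FP strategy, and the value function of every location is a cost function. -/
def PTG.FinitelyOptimal (G : PTG) (r : ℝ) : Prop :=
  (∃ σ : FPStrat G r Owner.min, σ.IsNC ∧ σ.FakeOpt) ∧
  (∃ τ : FPStrat G r Owner.max, τ.Opt) ∧
  ∀ ℓ : G.Loc, IsCostFunctionOn r fun ν => G.val (ℓ, ν)

/-- The finite set `F_G` of affine functions `k + φ_ℓ`, for `ℓ` final and
`k ∈ [−(|L|−1)·P_T, |L|·P_T] ∩ ℤ`. -/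
def PTG.FF (G : PTG) : Set (ℝ → ℝ) :=
  {f | ∃ (ℓ : G.Loc) (k : ℤ), G.owner ℓ = Owner.final ∧
    -(((G.nLoc : ℤ) - 1) * (G.PT : ℤ)) ≤ k ∧ k ≤ (G.nLoc : ℤ) * (G.PT : ℤ) ∧
    f = fun ν => (k : ℝ) + G.fcost ℓ ν}

noncomputable def PTG.FFcard (G : PTG) : ℕ := G.FF.ncard

/-- The set of possible cutpoints: intersection points of two distinct functions of `F_G`. -/
def PTG.posscp (G : PTG) (r : ℝ) : Set ℝ :=
  {ν | 0 ≤ ν ∧ ν ≤ r ∧ ∃ f₁ ∈ G.FF, ∃ f₂ ∈ G.FF, f₁ ≠ f₂ ∧ f₁ ν = f₂ ν}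

/-- The construction `Wait(G, r, x)`: all guards are restricted to `[0, r]` and, for every
non-urgent location `ℓ`, a clone final location `ℓ^f` is added, with final cost function
`ν ↦ (r − ν)·π(ℓ) + x_ℓ`, together with a price-0 transition `(ℓ, ℓ^f)`.
(Clone locations are created for all locations; those of urgent or final locations are
unreachable since no transition leads to them.) -/
noncomputable def PTG.wait (G : PTG) (r : ℝ) (x : G.Loc → ℝ) : PTG where
  Loc := G.Loc ⊕ G.Loc
  locFin := inferInstance
  locDec := inferInstance
  owner := Sum.elim G.owner fun _ => Owner.final
  urgent := Sum.elim G.urgent fun _ => false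
  M := G.M
  trans :=
    (G.trans.image fun δ =>
      { src := Sum.inl δ.src, lo := max δ.lo 0, hi := min δ.hi r,
        loOpen := δ.loOpen, hiOpen := δ.hiOpen, reset := δ.reset,
        price := δ.price, tgt := Sum.inl δ.tgt }) ∪
    ((Finset.univ.filter fun ℓ : G.Loc =>
        G.owner ℓ ≠ Owner.final ∧ G.urgent ℓ = false).image
      fun ℓ => { src := Sum.inl ℓ, lo := 0, hi := r, loOpen := false, hiOpen := false,
                 reset := false, price := 0, tgt := Sum.inr ℓ })
  price := Sum.elim G.price fun _ => 0
  fcost := Sum.elim G.fcost fun ℓ ν => (r - ν) * (G.price ℓ : ℝ) + x ℓ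

/-- `G_r = Wait(G, r, (Val_G(ℓ, r))_ℓ)`. -/
noncomputable def PTG.Gr (G : PTG) (r : ℝ) : PTG :=
  G.wait r fun ℓ => (G.val (ℓ, r)).toReal

/-- Making the locations indicated by `S` urgent. -/
def PTG.makeUrgent (G : PTG) (S : G.Loc → Bool) : PTG :=
  { G with urgent := fun ℓ => G.urgent ℓ || S ℓ }

/-- `G_{L', r}`: the game `G_r` in which all locations of `L'` are made urgent. -/
noncomputable def PTG.GLr (G : PTG) (S : G.Loc → Bool) (r : ℝ) : PTG :=
  (G.Gr r).makeUrgent (Sum.elim S fun _ => false)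

/-- The operator `Next_{L'}(r)`: the supremum of the `r' ≤ r` such that the value functions
of `G_{L',r}` and of `G` coincide on `[r', r]`. -/
noncomputable def PTG.Next (G : PTG) (S : G.Loc → Bool) (r : ℝ) : ℝ :=
  sSup {r' : ℝ | 0 ≤ r' ∧ r' ≤ r ∧ ∀ (ℓ : G.Loc) (ν : ℝ), r' ≤ ν → ν ≤ r →
    (G.GLr S r).val (Sum.inl ℓ, ν) = G.val (ℓ, ν)}

/-- Turning additionally location `ℓ` urgent: `L' ∪ {ℓ}` as a Boolean predicate. -/
def addLoc (G : PTG) (S : G.Loc → Bool) (ℓ : G.Loc) : G.Loc → Bool :=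
  fun ℓ' => S ℓ' || decide (ℓ' = ℓ)

/-- The singleton `{ℓ}` as a Boolean predicate. -/
def singLoc (G : PTG) (ℓ : G.Loc) : G.Loc → Bool := fun ℓ' => decide (ℓ' = ℓ)

/-- `f` is, on `[0, r]`, piecewise affine with at most `N` cutpoints. -/
def PWAffineOn (r : ℝ) (f : ℝ → EReal) (N : ℕ) : Prop :=
  ∃ n : ℕ, n ≤ N ∧ ∃ a : Fin (n + 2) → ℝ,
    Monotone a ∧ a 0 = 0 ∧ a (Fin.last (n + 1)) = r ∧
    ∀ i : Fin (n + 1), ∃ α β : ℝ, ∀ ν : ℝ, a i.castSucc ≤ ν → ν ≤ a i.succ →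
      f ν = ((α * ν + β : ℝ) : EReal)

/-- `f` has a cutpoint in `[a, b)`: some point of `[a, b)` has no neighbourhood
(within `[0,1]`) on which `f` is affine. -/
def HasCutpointIn (f : ℝ → EReal) (a b : ℝ) : Prop :=
  ∃ x : ℝ, a ≤ x ∧ x < b ∧ ∀ ε : ℝ, 0 < ε →
    ¬ ∃ α β : ℝ, ∀ ν : ℝ, max 0 (x - ε) ≤ ν → ν ≤ min 1 (x + ε) →
      f ν = ((α * ν + β : ℝ) : EReal)

/-- The endpoints of the guards of `G`, together with `0`. -/
noncomputable def PTG.endpoints (G : PTG) : Finset ℝ :=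
  insert 0 ((G.trans.image PTrans.lo) ∪ (G.trans.image PTrans.hi))

/-- `s` is a region of `G`: a singleton of an endpoint, or an open interval between two
consecutive endpoints. -/
def PTG.IsRegion (G : PTG) (s : Set ℝ) : Prop :=
  (∃ e ∈ G.endpoints, s = {e}) ∨
  ∃ e ∈ G.endpoints, ∃ e' ∈ G.endpoints, e < e' ∧
    (∀ p ∈ G.endpoints, p ≤ e ∨ e' ≤ p) ∧ s = Set.Ioo e e'

/-- No cycle of the configuration graph of `G` traverses a resetting transition. -/
def PTG.ResetAcyclic (G : PTG) : Prop :=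
  ¬ ∃ h : Hist G.Loc, G.HistValid h ∧ h.steps ≠ [] ∧ h.last = h.start ∧
      ∃ st ∈ h.steps, st.2.1.reset = true

/-- An `ε`-optimal strategy of Min. -/
def PTG.MinEpsOpt (G : PTG) (σ : StratFun G.Loc) (ε : ℝ) : Prop :=
  G.MinValid σ ∧ ∀ (ℓ : G.Loc) (ν : ℝ), 0 ≤ ν → ν ≤ (G.M : ℝ) →
    G.minValue σ (ℓ, ν) ≤ G.val (ℓ, ν) + (ε : EReal)

/-- An `ε`-optimal strategy of Max. -/
def PTG.MaxEpsOpt (G : PTG) (τ : StratFun G.Loc) (ε : ℝ) : Prop :=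
  G.MaxValid τ ∧ ∀ (ℓ : G.Loc) (ν : ℝ), 0 ≤ ν → ν ≤ (G.M : ℝ) →
    G.val (ℓ, ν) - (ε : EReal) ≤ G.maxValue τ (ℓ, ν)

end PTGPaper
namespace PTGPaper

/-!
Every non-final location is urgent and no transition resets the clock, so the clock keeps its
initial value `ν` along every play: from `(ℓ, ν)` the game is a min-cost reachability game
on the location graph with final costs `φ_f(ν)`. Its value is the limit `valueLim` of value
iteration: Max secures it by playing greedily for `valueLim`, and Min gets within it by playing
optimally in the `N`-step game. Value iteration only produces values in
`{+∞} ∪ {k + φ_f(ν) : k ∈ ℤ}`, so a finite value is reached after finitely many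
iterations, and following the optimal transitions from there gives a path to a final location
along which `valueLim` drops exactly by the transition prices. Cutting out its cycles leaves at
most `|L| - 1` transitions, whence `Val(ℓ, ν) = k + φ_f(ν)` with `|k| ≤ (|L| - 1)·P_T`.
-/

theorem Hist.lastFrom_append_singleton {L : Type} (s : L × ℝ)
    (l : List (ℝ × PTrans L × (L × ℝ))) (e : ℝ × PTrans L × (L × ℝ)) :
    Hist.lastFrom s (l ++ [e]) = e.2.2 := by
  induction l generalizing s with
  | nil => rfl
  | cons a l ih => exact ih a.2.2

theorem Hist.costFrom_append_singleton {L : Type} (π : L → ℤ) (s : L × ℝ)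
    (l : List (ℝ × PTrans L × (L × ℝ))) (e : ℝ × PTrans L × (L × ℝ)) :
    Hist.costFrom π s (l ++ [e]) =
      Hist.costFrom π s l + ((e.2.1.price : ℝ) + e.1 * (π (Hist.lastFrom s l).1 : ℝ)) := by
  induction l generalizing s with
  | nil => simp [Hist.costFrom, Hist.lastFrom]
  | cons a l ih => simp only [List.cons_append, Hist.costFrom, Hist.lastFrom, ih]; ring

theorem PTG.validFrom_append_singleton (G : PTG) (s : G.Config)
    (l : List (ℝ × PTrans G.Loc × G.Config)) (t : ℝ) (δ : PTrans G.Loc) (s' : G.Config) :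
    G.ValidFrom s (l ++ [(t, δ, s')]) ↔
      G.ValidFrom s l ∧ ∃ c, G.Move (Hist.lastFrom s l) s' t δ c := by
  induction l generalizing s with
  | nil => simp [PTG.ValidFrom, Hist.lastFrom]
  | cons a l ih => simp [PTG.ValidFrom, ih, Hist.lastFrom, and_assoc]

theorem EReal.coe_add_iInf {ι : Sort*} (c : ℝ) (f : ι → EReal) :
    (c : EReal) + ⨅ i, f i = ⨅ i, ((c : EReal) + f i) := by
  refine le_antisymm (le_iInf fun i => add_le_add_right (iInf_le f i) _) ?_
  rw [add_comm, ← EReal.sub_le_iff_le_add (.inl (EReal.coe_ne_bot c))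
    (.inl (EReal.coe_ne_top c))]
  refine le_iInf fun i => ?_
  calc (⨅ i, ((c : EReal) + f i)) - c ≤ (c + f i) - c := EReal.sub_le_sub (iInf_le _ i) le_rfl
    _ = f i := EReal.add_sub_cancel_left

theorem iInf_finset_sup_of_antitone {α β : Type*} [CompleteLinearOrder α] (s : Finset β)
    (g : ℕ → β → α) (hg : ∀ b, Antitone (g · b)) :
    ⨅ n, s.sup (g n) = s.sup fun b => ⨅ n, g n b := by
  classical
  induction s using Finset.induction_on with
  | empty => simp
  | insert b s _ ih =>
    simp only [Finset.sup_insert, ← ih]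
    exact iInf_sup_of_antitone (hg b) fun m n hmn => Finset.sup_mono_fun fun b _ => hg b hmn

theorem iInf_finset_inf {α β : Type*} [CompleteLattice α] (s : Finset β)
    (g : ℕ → β → α) :
    ⨅ n, s.inf (g n) = s.inf fun b => ⨅ n, g n b := by
  simp only [Finset.inf_eq_iInf]
  exact iInf_comm.trans (iInf_congr fun b => iInf_comm)

theorem finite_Icc_inter_int_add {ι : Type*} [Finite ι] (c : ι → ℝ) (a b : ℝ) :
    {y : ℝ | y ∈ Set.Icc a b ∧ ∃ (k : ℤ) (i : ι), y = k + c i}.Finite := by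
  refine (Set.finite_iUnion fun i =>
    (Set.finite_Icc ⌈a - c i⌉ ⌊b - c i⌋).image fun k : ℤ => (k : ℝ) + c i).subset ?_
  rintro _ ⟨⟨ha, hb⟩, k, i, rfl⟩
  exact Set.mem_iUnion.2
    ⟨i, k, ⟨Int.ceil_le.2 (by linarith), Int.le_floor.2 (by linarith)⟩, rfl⟩

def PTG.outTrans (G : PTG) (ℓ : G.Loc) : Finset (PTrans G.Loc) :=
  G.trans.filter (·.src = ℓ)

theorem PTG.mem_outTrans {G : PTG} {ℓ : G.Loc} {δ : PTrans G.Loc} :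
    δ ∈ G.outTrans ℓ ↔ δ ∈ G.trans ∧ δ.src = ℓ :=
  Finset.mem_filter

theorem PTG.WF.outTrans_nonempty {G : PTG} (hwf : G.WF) {ℓ : G.Loc}
    (hℓ : G.owner ℓ ≠ Owner.final) : (G.outTrans ℓ).Nonempty := by
  obtain ⟨_, _, δ, _, hm⟩ := hwf.2.2.2.2 ℓ 0 hℓ le_rfl (Nat.cast_nonneg _)
  exact ⟨δ, PTG.mem_outTrans.2 ⟨hm.1, hm.2.1⟩⟩

theorem PTG.price_abs_le_PT {G : PTG} {δ : PTrans G.Loc} (h : δ ∈ G.trans) :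
    |δ.price| ≤ (G.PT : ℤ) := by
  rw [Int.abs_eq_natAbs]
  exact_mod_cast Finset.le_sup (f := fun δ => δ.price.natAbs) h

theorem PTG.IsSPTG.move {G : PTG} {r : ℝ} (hsptg : G.IsSPTG r) {s : G.Config}
    {δ : PTrans G.Loc} (hδ : δ ∈ G.outTrans s.1) (hs : s.2 ∈ Set.Icc 0 r) :
    G.Move s (δ.tgt, s.2) 0 δ δ.price := by
  obtain ⟨hmem, hsrc⟩ := PTG.mem_outTrans.1 hδ
  obtain ⟨hlo, hhi, hloO, hhiO, hres⟩ := hsptg.2.2 δ hmem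
  refine ⟨hmem, hsrc, le_rfl, fun _ => rfl, ?_, rfl, by simp [hres], by ring⟩
  simp [PTrans.memGuard, hlo, hhi, hloO, hhiO, hs.1, hs.2]

theorem PTG.IsSPTG.M_eq {G : PTG} {r : ℝ} (hsptg : G.IsSPTG r) (hwf : G.WF)
    (hex : ∃ ℓ, G.owner ℓ ≠ Owner.final) : (G.M : ℝ) = r := by
  obtain ⟨ℓ, hℓ⟩ := hex
  apply le_antisymm
  · obtain ⟨_, t, δ, _, hmem, -, ht, -, hguard, -⟩ :=
      hwf.2.2.2.2 ℓ G.M hℓ (Nat.cast_nonneg _) le_rfl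
    obtain ⟨-, hhi, -, hhiO, -⟩ := hsptg.2.2 δ hmem
    have := hguard.2
    simp only [hhiO, hhi, Bool.false_eq_true, if_false] at this
    linarith
  · obtain ⟨δ, hδ⟩ := hwf.outTrans_nonempty hℓ
    have hmem := (PTG.mem_outTrans.1 hδ).1
    exact (hsptg.2.2 δ hmem).2.1 ▸ (hwf.2.1 δ hmem).2

structure PTG.IsUrgentSPTG (G : PTG) (r : ℝ) : Prop where
  wf : G.WF
  sptg : G.IsSPTG r
  urgent : ∀ ℓ, G.owner ℓ ≠ Owner.final → G.urgent ℓ = true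

namespace PTG.IsUrgentSPTG

variable {G : PTG} {r : ℝ}

theorem move_eq (hG : G.IsUrgentSPTG r) {s s' : G.Config} {t : ℝ} {δ : PTrans G.Loc}
    {c : ℝ} (hm : G.Move s s' t δ c) :
    δ ∈ G.outTrans s.1 ∧ t = 0 ∧ s' = (δ.tgt, s.2) ∧ c = δ.price := by
  obtain ⟨hmem, hsrc, -, hturg, -, hs1, hs2, hc⟩ := hm
  have ht : t = 0 := hturg (hG.urgent _ (hsrc ▸ hG.wf.1 δ hmem))
  have hres := (hG.sptg.2.2 δ hmem).2.2.2.2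
  refine ⟨PTG.mem_outTrans.2 ⟨hmem, hsrc⟩, ht, Prod.ext hs1 ?_, by simp [hc, ht]⟩
  simp [hs2, hres, ht]

theorem lastFrom_snd (hG : G.IsUrgentSPTG r) :
    ∀ {l : List (ℝ × PTrans G.Loc × G.Config)} {s : G.Config},
      G.ValidFrom s l → (Hist.lastFrom s l).2 = s.2
  | [], _, _ => rfl
  | (_, _, _) :: _, _, ⟨⟨_, hm⟩, hv⟩ =>
    (lastFrom_snd hG hv).trans (by rw [(hG.move_eq hm).2.2.1])

end PTG.IsUrgentSPTG

namespace PTG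

variable {G : PTG} {ν : ℝ}

noncomputable def valueIter (G : PTG) (ν : ℝ) : ℕ → G.Loc → EReal
  | 0 => fun ℓ => if G.owner ℓ = Owner.final then ((G.fcost ℓ ν : ℝ) : EReal) else ⊤
  | n + 1 => fun ℓ =>
      if G.owner ℓ = Owner.final then ((G.fcost ℓ ν : ℝ) : EReal)
      else if G.owner ℓ = Owner.min then
        (G.outTrans ℓ).inf fun δ => ((δ.price : ℝ) : EReal) + G.valueIter ν n δ.tgt
      else (G.outTrans ℓ).sup fun δ => ((δ.price : ℝ) : EReal) + G.valueIter ν n δ.tgt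

noncomputable def valueLim (G : PTG) (ν : ℝ) (ℓ : G.Loc) : EReal := ⨅ n, G.valueIter ν n ℓ

theorem valueIter_zero_of_ne_final {ℓ : G.Loc} (hℓ : G.owner ℓ ≠ Owner.final) :
    G.valueIter ν 0 ℓ = ⊤ := by
  simp [valueIter, hℓ]

theorem valueIter_of_final {ℓ : G.Loc} (hℓ : G.owner ℓ = Owner.final) (n : ℕ) :
    G.valueIter ν n ℓ = ((G.fcost ℓ ν : ℝ) : EReal) := by
  cases n <;> simp [valueIter, hℓ]

theorem valueIter_succ_of_min {ℓ : G.Loc} (hℓ : G.owner ℓ = Owner.min) (n : ℕ) :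
    G.valueIter ν (n + 1) ℓ =
      (G.outTrans ℓ).inf fun δ => ((δ.price : ℝ) : EReal) + G.valueIter ν n δ.tgt := by
  simp [valueIter, hℓ]

theorem valueIter_succ_of_max {ℓ : G.Loc} (hℓ : G.owner ℓ = Owner.max) (n : ℕ) :
    G.valueIter ν (n + 1) ℓ =
      (G.outTrans ℓ).sup fun δ => ((δ.price : ℝ) : EReal) + G.valueIter ν n δ.tgt := by
  simp [valueIter, hℓ]

theorem valueIter_antitone (ℓ : G.Loc) : Antitone fun n => G.valueIter ν n ℓ := by
  refine antitone_nat_of_succ_le fun n => ?_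
  induction n generalizing ℓ with
  | zero =>
    by_cases hℓ : G.owner ℓ = Owner.final
    · simp [valueIter_of_final hℓ]
    · simp [valueIter_zero_of_ne_final hℓ]
  | succ n ih =>
    cases hℓ : G.owner ℓ with
    | final => simp [valueIter_of_final hℓ]
    | min =>
      simp only [valueIter_succ_of_min hℓ]
      exact Finset.inf_mono_fun fun δ _ => add_le_add_right (ih δ.tgt) _
    | max =>
      simp only [valueIter_succ_of_max hℓ]
      exact Finset.sup_mono_fun fun δ _ => add_le_add_right (ih δ.tgt) _

theorem valueLim_le_valueIter (ℓ : G.Loc) (n : ℕ) :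
    G.valueLim ν ℓ ≤ G.valueIter ν n ℓ :=
  iInf_le _ n

theorem valueLim_of_final {ℓ : G.Loc} (hℓ : G.owner ℓ = Owner.final) :
    G.valueLim ν ℓ = ((G.fcost ℓ ν : ℝ) : EReal) := by
  simp [valueLim, valueIter_of_final hℓ]

theorem valueLim_eq_iInf_valueIter_succ (ℓ : G.Loc) :
    G.valueLim ν ℓ = ⨅ n, G.valueIter ν (n + 1) ℓ :=
  ((valueIter_antitone ℓ).iInf_nat_add 1).symm

theorem valueLim_of_min {ℓ : G.Loc} (hℓ : G.owner ℓ = Owner.min) :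
    G.valueLim ν ℓ =
      (G.outTrans ℓ).inf fun δ => ((δ.price : ℝ) : EReal) + G.valueLim ν δ.tgt := by
  simp only [valueLim_eq_iInf_valueIter_succ ℓ, valueIter_succ_of_min hℓ, iInf_finset_inf]
  exact Finset.inf_congr rfl fun δ _ => (EReal.coe_add_iInf _ _).symm

theorem valueLim_of_max {ℓ : G.Loc} (hℓ : G.owner ℓ = Owner.max) :
    G.valueLim ν ℓ =
      (G.outTrans ℓ).sup fun δ => ((δ.price : ℝ) : EReal) + G.valueLim ν δ.tgt := by
  simp only [valueLim_eq_iInf_valueIter_succ ℓ, valueIter_succ_of_max hℓ]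
  rw [iInf_finset_sup_of_antitone _ _ fun δ m n hmn =>
    add_le_add_right (valueIter_antitone δ.tgt hmn) _]
  exact Finset.sup_congr rfl fun δ _ => (EReal.coe_add_iInf _ _).symm

theorem WF.exists_valueIter_succ_eq (hwf : G.WF) {ℓ : G.Loc} (hℓ : G.owner ℓ ≠ Owner.final)
    (n : ℕ) : ∃ δ ∈ G.outTrans ℓ,
      G.valueIter ν (n + 1) ℓ = ((δ.price : ℝ) : EReal) + G.valueIter ν n δ.tgt := by
  have hne := hwf.outTrans_nonempty hℓ
  cases hmin : G.owner ℓ with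
  | final => exact absurd hmin hℓ
  | min => simpa only [valueIter_succ_of_min hmin] using Finset.exists_mem_eq_inf _ hne _
  | max => simpa only [valueIter_succ_of_max hmin] using Finset.exists_mem_eq_sup _ hne _

theorem WF.exists_valueLim_eq_of_max (hwf : G.WF) {ℓ : G.Loc} (hℓ : G.owner ℓ = Owner.max) :
    ∃ δ ∈ G.outTrans ℓ,
      G.valueLim ν ℓ = ((δ.price : ℝ) : EReal) + G.valueLim ν δ.tgt := by
  rw [valueLim_of_max hℓ]
  exact Finset.exists_mem_eq_sup _ (hwf.outTrans_nonempty (by simp [hℓ])) _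

theorem WF.valueIter_eq_top_or_int_add_fcost (hwf : G.WF) (n : ℕ) (ℓ : G.Loc) :
    G.valueIter ν n ℓ = ⊤ ∨
      ∃ (k : ℤ) (f : G.Loc), G.valueIter ν n ℓ = ((k + G.fcost f ν : ℝ) : EReal) := by
  by_cases hℓ : G.owner ℓ = Owner.final
  · exact .inr ⟨0, ℓ, by simp [valueIter_of_final hℓ]⟩
  induction n generalizing ℓ with
  | zero => exact .inl (valueIter_zero_of_ne_final hℓ)
  | succ n ih =>
    obtain ⟨δ, -, hδ⟩ := hwf.exists_valueIter_succ_eq (ν := ν) hℓ n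
    rw [hδ]
    by_cases hδf : G.owner δ.tgt = Owner.final
    · exact .inr ⟨δ.price, δ.tgt, by simp [valueIter_of_final hδf, ← EReal.coe_add]⟩
    rcases ih δ.tgt hδf with htop | ⟨k, f, hk⟩
    · exact .inl (by simp [htop])
    · exact .inr ⟨δ.price + k, f, by rw [hk, ← EReal.coe_add]; push_cast; rw [add_assoc]⟩

theorem WF.exists_valueIter_eq_valueLim (hwf : G.WF) {ℓ : G.Loc} {x : ℝ}
    (hx : G.valueLim ν ℓ = x) : ∃ N, G.valueIter ν N ℓ = G.valueLim ν ℓ := by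
  obtain ⟨N₀, hN₀⟩ : ∃ N₀, G.valueIter ν N₀ ℓ ≠ ⊤ := by
    by_contra! h
    simp [valueLim, h] at hx
  obtain ⟨k₀, f₀, hN₀eq⟩ :=
    (hwf.valueIter_eq_top_or_int_add_fcost N₀ ℓ).resolve_left hN₀
  set u := fun n => G.valueIter ν (n + N₀) ℓ
  have hrange : Set.range u ⊆ (fun y : ℝ => (y : EReal)) ''
      {y | y ∈ Set.Icc x (k₀ + G.fcost f₀ ν) ∧
        ∃ (k : ℤ) (f : G.Loc), y = k + G.fcost f ν} := by
    rintro _ ⟨n, rfl⟩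
    have hle : u n ≤ G.valueIter ν N₀ ℓ := valueIter_antitone ℓ (Nat.le_add_left N₀ n)
    have hge : (x : EReal) ≤ u n := hx ▸ valueLim_le_valueIter ℓ _
    rcases hwf.valueIter_eq_top_or_int_add_fcost (n + N₀) ℓ with htop | ⟨k, f, hk⟩
    · exact absurd (top_le_iff.1 (htop ▸ hle)) hN₀
    · rw [show u n = _ from hk, hN₀eq, EReal.coe_le_coe_iff] at hle
      rw [show u n = _ from hk, EReal.coe_le_coe_iff] at hge
      exact ⟨_, ⟨⟨hge, hle⟩, k, f, rfl⟩, hk.symm⟩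
  obtain ⟨n, hn⟩ := (Set.range_nonempty u).csInf_mem
    (((finite_Icc_inter_int_add _ _ _).image _).subset hrange)
  refine ⟨n + N₀, hn.trans ?_⟩
  rw [sInf_range]
  exact (valueIter_antitone ℓ).iInf_nat_add N₀

def TightPath (G : PTG) (p : G.Loc → EReal) : G.Loc → G.Loc → List (PTrans G.Loc) → Prop
  | a, b, [] => a = b
  | a, b, δ :: ds => δ ∈ G.outTrans a ∧ p a = ((δ.price : ℝ) : EReal) + p δ.tgt ∧
      G.TightPath p δ.tgt b ds

namespace TightPath

variable {p : G.Loc → EReal} {b : G.Loc}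

theorem eq_sum_add : ∀ {ds : List (PTrans G.Loc)} {a : G.Loc}, G.TightPath p a b ds →
    p a = ((((ds.map PTrans.price).sum : ℤ) : ℝ) : EReal) + p b
  | [], _, rfl => by simp
  | δ :: _, _, ⟨_, hp, h⟩ => by
    rw [hp, eq_sum_add h, ← add_assoc, ← EReal.coe_add]
    push_cast
    rfl

theorem abs_sum_le : ∀ {ds : List (PTrans G.Loc)} {a : G.Loc}, G.TightPath p a b ds →
    |(ds.map PTrans.price).sum| ≤ ds.length * (G.PT : ℤ)
  | [], _, _ => by simp
  | δ :: ds, _, ⟨hδ, _, h⟩ => by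
    simp only [List.map_cons, List.sum_cons, List.length_cons]
    push_cast
    linarith [abs_add_le δ.price (ds.map PTrans.price).sum, abs_sum_le h,
      price_abs_le_PT (mem_outTrans.1 hδ).1]

theorem exists_suffix : ∀ {ds : List (PTrans G.Loc)} {a : G.Loc}, G.TightPath p a b ds →
    ∀ {y : G.Loc}, y ∈ a :: ds.map PTrans.tgt →
      ∃ ds', G.TightPath p y b ds' ∧ y :: ds'.map PTrans.tgt <:+ a :: ds.map PTrans.tgt
  | [], _, h, _, hy => by
    obtain rfl := List.mem_singleton.1 hy
    exact ⟨[], h, List.suffix_refl _⟩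
  | δ :: ds, a, h, y, hy => by
    rcases List.mem_cons.1 hy with rfl | hy
    · exact ⟨δ :: ds, h, List.suffix_refl _⟩
    · obtain ⟨ds', h', hsuf⟩ := exists_suffix h.2.2 hy
      exact ⟨ds', h', hsuf.trans (List.suffix_cons _ _)⟩

theorem exists_nodup : ∀ {ds : List (PTrans G.Loc)} {a : G.Loc}, G.TightPath p a b ds →
    ∃ ds', G.TightPath p a b ds' ∧ (a :: ds'.map PTrans.tgt).Nodup
  | [], _, h => ⟨[], h, by simp⟩
  | δ :: _, a, ⟨hδ, hp, h⟩ => by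
    obtain ⟨ds', h', hnd⟩ := exists_nodup h
    by_cases ha : a ∈ δ.tgt :: ds'.map PTrans.tgt
    · obtain ⟨ds'', h'', hsuf⟩ := exists_suffix h' ha
      exact ⟨ds'', h'', hnd.sublist hsuf.sublist⟩
    · exact ⟨δ :: ds', ⟨hδ, hp, h'⟩, List.nodup_cons.2 ⟨ha, hnd⟩⟩

end TightPath

/-- Induction on the number of iterations after which `valueIter` reaches `valueLim` at `ℓ`:
a transition realising the optimum of the Bellman equation leads to a location needing one
iteration fewer. -/
theorem WF.exists_tightPath (hwf : G.WF) (N : ℕ) {ℓ : G.Loc}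
    (hN : G.valueIter ν N ℓ = G.valueLim ν ℓ) (htop : G.valueLim ν ℓ ≠ ⊤) :
    ∃ f ds, G.owner f = Owner.final ∧ G.TightPath (G.valueLim ν) ℓ f ds := by
  induction N generalizing ℓ with
  | zero =>
    by_contra! hℓ
    exact htop (hN ▸ valueIter_zero_of_ne_final fun hf => hℓ ℓ [] hf rfl)
  | succ N ih =>
    by_cases hℓ : G.owner ℓ = Owner.final
    · exact ⟨ℓ, [], hℓ, rfl⟩
    obtain ⟨δ, hδ, hlow, hup⟩ : ∃ δ ∈ G.outTrans ℓ,
        G.valueLim ν ℓ ≤ ((δ.price : ℝ) : EReal) + G.valueLim ν δ.tgt ∧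
        ((δ.price : ℝ) : EReal) + G.valueIter ν N δ.tgt ≤ G.valueLim ν ℓ := by
      cases hown : G.owner ℓ with
      | final => exact absurd hown hℓ
      | min =>
        obtain ⟨δ, hδ, hδeq⟩ := hwf.exists_valueIter_succ_eq (ν := ν) hℓ N
        refine ⟨δ, hδ, ?_, (hδeq.symm.trans hN).le⟩
        rw [valueLim_of_min hown]
        exact Finset.inf_le (f := fun δ => ((δ.price : ℝ) : EReal) + G.valueLim ν δ.tgt) hδ
      | max =>
        obtain ⟨δ, hδ, hδeq⟩ := hwf.exists_valueLim_eq_of_max (ν := ν) hown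
        refine ⟨δ, hδ, hδeq.le, ?_⟩
        rw [← hN, valueIter_succ_of_max hown]
        exact Finset.le_sup
          (f := fun δ => ((δ.price : ℝ) : EReal) + G.valueIter ν N δ.tgt) hδ
    have hmid :=
      add_le_add_right (valueLim_le_valueIter (ν := ν) δ.tgt N) ((δ.price : ℝ) : EReal)
    have hstep : G.valueLim ν ℓ = ((δ.price : ℝ) : EReal) + G.valueLim ν δ.tgt :=
      le_antisymm hlow (hmid.trans hup)
    have htgt : G.valueIter ν N δ.tgt = G.valueLim ν δ.tgt :=
      (EReal.addLECancellable_coe _).inj.1 (le_antisymm (hup.trans hlow) hmid)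
    obtain ⟨f, ds, hf, hds⟩ := ih htgt fun h => htop (by simp [hstep, h])
    exact ⟨f, δ :: ds, hf, hδ, hstep, hds⟩

theorem WF.exists_eq_int_add_fcost (hwf : G.WF) {ℓ : G.Loc} {x : ℝ}
    (hx : G.valueLim ν ℓ = x) : ∃ (f : G.Loc) (k : ℤ), G.owner f = Owner.final ∧
      |k| ≤ ((G.nLoc : ℤ) - 1) * (G.PT : ℤ) ∧ x = k + G.fcost f ν := by
  obtain ⟨N, hN⟩ := hwf.exists_valueIter_eq_valueLim hx
  obtain ⟨f, ds, hf, hds⟩ := hwf.exists_tightPath N hN (hx ▸ EReal.coe_ne_top x)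
  obtain ⟨ds, hds, hnd⟩ := hds.exists_nodup
  have hlen : ds.length + 1 ≤ G.nLoc := by simpa [nLoc] using hnd.length_le_card
  refine ⟨f, (ds.map PTrans.price).sum, hf, hds.abs_sum_le.trans ?_, ?_⟩
  · gcongr
    omega
  · have h := hds.eq_sum_add
    rw [hx, valueLim_of_final hf, ← EReal.coe_add] at h
    exact_mod_cast h

variable {σ τ : StratFun G.Loc} {s₀ : G.Config} {n : ℕ}

noncomputable def playMove (G : PTG) (σ τ : StratFun G.Loc) (s₀ : G.Config) (n : ℕ) :
    ℝ × PTrans G.Loc :=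
  if G.owner (G.histOf σ τ s₀ n).last.1 = Owner.min then σ (G.histOf σ τ s₀ n)
  else τ (G.histOf σ τ s₀ n)

theorem playMove_of_min (h : G.owner (G.histOf σ τ s₀ n).last.1 = Owner.min) :
    G.playMove σ τ s₀ n = σ (G.histOf σ τ s₀ n) :=
  if_pos h

theorem playMove_of_max (h : G.owner (G.histOf σ τ s₀ n).last.1 = Owner.max) :
    G.playMove σ τ s₀ n = τ (G.histOf σ τ s₀ n) :=
  if_neg (by simp [h])

theorem histOf_succ_of_final (hf : G.owner (G.histOf σ τ s₀ n).last.1 = Owner.final) :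
    G.histOf σ τ s₀ (n + 1) = G.histOf σ τ s₀ n := by
  simp [histOf, hf]

theorem histOf_succ_of_ne_final (hf : G.owner (G.histOf σ τ s₀ n).last.1 ≠ Owner.final) :
    G.histOf σ τ s₀ (n + 1) =
      ⟨(G.histOf σ τ s₀ n).start, (G.histOf σ τ s₀ n).steps ++
        [((G.playMove σ τ s₀ n).1, (G.playMove σ τ s₀ n).2,
          G.nextCfg (G.histOf σ τ s₀ n).last (G.playMove σ τ s₀ n))]⟩ := by
  simp [histOf, hf, playMove]

theorem histOf_start : ∀ n, (G.histOf σ τ s₀ n).start = s₀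
  | 0 => rfl
  | n + 1 => by
    by_cases hf : G.owner (G.histOf σ τ s₀ n).last.1 = Owner.final
    · rw [histOf_succ_of_final hf, histOf_start n]
    · rw [histOf_succ_of_ne_final hf, histOf_start n]

theorem histOf_length (hf : G.owner (G.histOf σ τ s₀ n).last.1 ≠ Owner.final) :
    (G.histOf σ τ s₀ n).steps.length = n := by
  induction n with
  | zero => rfl
  | succ n ih =>
    have hf' : G.owner (G.histOf σ τ s₀ n).last.1 ≠ Owner.final := fun h =>
      hf (by rwa [histOf_succ_of_final h])
    simp [histOf_succ_of_ne_final hf', ih hf']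

theorem histOf_succ_last (hf : G.owner (G.histOf σ τ s₀ n).last.1 ≠ Owner.final) :
    (G.histOf σ τ s₀ (n + 1)).last =
      G.nextCfg (G.histOf σ τ s₀ n).last (G.playMove σ τ s₀ n) := by
  rw [histOf_succ_of_ne_final hf]
  exact Hist.lastFrom_append_singleton _ _ _

theorem accCost_histOf_succ (hf : G.owner (G.histOf σ τ s₀ n).last.1 ≠ Owner.final) :
    G.accCost (G.histOf σ τ s₀ (n + 1)) = G.accCost (G.histOf σ τ s₀ n) +
      ((G.playMove σ τ s₀ n).2.price +
        (G.playMove σ τ s₀ n).1 * G.price (G.histOf σ τ s₀ n).last.1) := by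
  rw [histOf_succ_of_ne_final hf]
  exact Hist.costFrom_append_singleton _ _ _ _

open Classical in
noncomputable def pickTrans (G : PTG) (ℓ : G.Loc) (P : PTrans G.Loc → Prop) : PTrans G.Loc :=
  if h : ∃ δ ∈ G.outTrans ℓ, P δ then h.choose
  else ⟨ℓ, 0, 0, false, false, false, 0, ℓ⟩

theorem pickTrans_spec {ℓ : G.Loc} {P : PTrans G.Loc → Prop}
    (h : ∃ δ ∈ G.outTrans ℓ, P δ) :
    G.pickTrans ℓ P ∈ G.outTrans ℓ ∧ P (G.pickTrans ℓ P) := by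
  rw [pickTrans, dif_pos h]
  exact h.choose_spec

noncomputable def maxGreedy (G : PTG) (ν : ℝ) : StratFun G.Loc := fun h =>
  (0, G.pickTrans h.last.1 fun δ =>
    G.valueLim ν h.last.1 = ((δ.price : ℝ) : EReal) + G.valueLim ν δ.tgt)

/-- After `k` steps Min plays optimally for the `(N - k)`-step game, so that she reaches a final
location within `N` steps whenever `G.valueIter ν N` is finite. The index is written
`N - 1 - k + 1` so that the Bellman step behind the choice exists for every `k`. -/
noncomputable def minCountdown (G : PTG) (ν : ℝ) (N : ℕ) : StratFun G.Loc := fun h =>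
  (0, G.pickTrans h.last.1 fun δ =>
    G.valueIter ν (N - 1 - h.steps.length + 1) h.last.1 =
      ((δ.price : ℝ) : EReal) + G.valueIter ν (N - 1 - h.steps.length) δ.tgt)

namespace IsUrgentSPTG

variable {r : ℝ}

theorem stratValid_of_mem_outTrans (hG : G.IsUrgentSPTG r) {P : Owner}
    {c : Hist G.Loc → PTrans G.Loc}
    (hc : ∀ h, G.HistValid h → G.owner h.last.1 = P → c h ∈ G.outTrans h.last.1) :
    G.StratValid P fun h => (0, c h) := by
  intro h hv hP
  have hch := hc h hv hP
  obtain ⟨hmem, hsrc⟩ := mem_outTrans.1 hch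
  have hclock : h.last.2 = h.start.2 := hG.lastFrom_snd hv.2.2
  have hM := hG.sptg.M_eq hG.wf ⟨_, hsrc ▸ hG.wf.1 _ hmem⟩
  exact ⟨_, _, hG.sptg.move hch (hclock ▸ hM ▸ ⟨hv.1, hv.2.1⟩)⟩

theorem maxGreedy_valid (hG : G.IsUrgentSPTG r) (ν : ℝ) : G.MaxValid (G.maxGreedy ν) :=
  hG.stratValid_of_mem_outTrans fun _ _ hP =>
    (pickTrans_spec (hG.wf.exists_valueLim_eq_of_max hP)).1

theorem minCountdown_valid (hG : G.IsUrgentSPTG r) (ν : ℝ) (N : ℕ) :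
    G.MinValid (G.minCountdown ν N) :=
  hG.stratValid_of_mem_outTrans fun _ _ hP =>
    (pickTrans_spec (hG.wf.exists_valueIter_succ_eq (by simp [hP]) _)).1

end IsUrgentSPTG

end PTG

namespace PTG.IsUrgentSPTG

variable {G : PTG} {r ν : ℝ} {σ τ : StratFun G.Loc} {s₀ : G.Config} {ℓ₀ : G.Loc}
  {n : ℕ}

theorem playMove_legal (hG : G.IsUrgentSPTG r) (hσ : G.MinValid σ) (hτ : G.MaxValid τ)
    (hv : G.HistValid (G.histOf σ τ s₀ n))
    (hf : G.owner (G.histOf σ τ s₀ n).last.1 ≠ Owner.final) :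
    (G.playMove σ τ s₀ n).2 ∈ G.outTrans (G.histOf σ τ s₀ n).last.1 ∧
      (G.playMove σ τ s₀ n).1 = 0 := by
  obtain ⟨s', c, hm⟩ : ∃ s' c, G.Move (G.histOf σ τ s₀ n).last s'
      (G.playMove σ τ s₀ n).1 (G.playMove σ τ s₀ n).2 c := by
    cases hown : G.owner (G.histOf σ τ s₀ n).last.1 with
    | final => exact absurd hown hf
    | min => rw [playMove_of_min hown]; exact hσ _ hv hown
    | max => rw [playMove_of_max hown]; exact hτ _ hv hown
  exact ⟨(hG.move_eq hm).1, (hG.move_eq hm).2.1⟩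

theorem histOf_valid (hG : G.IsUrgentSPTG r) (hσ : G.MinValid σ) (hτ : G.MaxValid τ)
    (hs₀ : s₀.2 ∈ Set.Icc 0 (G.M : ℝ)) : ∀ n, G.HistValid (G.histOf σ τ s₀ n)
  | 0 => ⟨hs₀.1, hs₀.2, trivial⟩
  | n + 1 => by
    have ih := histOf_valid hG hσ hτ hs₀ n
    by_cases hf : G.owner (G.histOf σ τ s₀ n).last.1 = Owner.final
    · rwa [histOf_succ_of_final hf]
    obtain ⟨hδ, ht⟩ := playMove_legal hG hσ hτ ih hf
    have hclock : (G.histOf σ τ s₀ n).last.2 = (G.histOf σ τ s₀ n).start.2 :=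
      hG.lastFrom_snd ih.2.2
    rw [histOf_start] at hclock
    have hm := hG.sptg.move hδ (hclock ▸ hG.sptg.M_eq hG.wf ⟨_, hf⟩ ▸ hs₀)
    rw [histOf_succ_of_ne_final hf]
    refine ⟨ih.1, ih.2.1, (G.validFrom_append_singleton _ _ _ _ _).2
      ⟨ih.2.2, (G.playMove σ τ s₀ n).2.price, ?_⟩⟩
    simpa [PTG.nextCfg, ht, (hG.sptg.2.2 _ (mem_outTrans.1 hδ).1).2.2.2.2, Hist.last] using hm

theorem histOf_last_snd (hG : G.IsUrgentSPTG r) (hσ : G.MinValid σ) (hτ : G.MaxValid τ)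
    (hs₀ : s₀.2 ∈ Set.Icc 0 (G.M : ℝ)) (n : ℕ) :
    (G.histOf σ τ s₀ n).last.2 = s₀.2 := by
  have hclock : (G.histOf σ τ s₀ n).last.2 = (G.histOf σ τ s₀ n).start.2 :=
    hG.lastFrom_snd (histOf_valid hG hσ hτ hs₀ n).2.2
  rwa [histOf_start] at hclock

theorem histOf_step (hG : G.IsUrgentSPTG r) (hσ : G.MinValid σ) (hτ : G.MaxValid τ)
    (hs₀ : s₀.2 ∈ Set.Icc 0 (G.M : ℝ))
    (hf : G.owner (G.histOf σ τ s₀ n).last.1 ≠ Owner.final) :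
    (G.playMove σ τ s₀ n).2 ∈ G.outTrans (G.histOf σ τ s₀ n).last.1 ∧
      (G.histOf σ τ s₀ (n + 1)).last.1 = (G.playMove σ τ s₀ n).2.tgt ∧
      G.accCost (G.histOf σ τ s₀ (n + 1)) =
        G.accCost (G.histOf σ τ s₀ n) + (G.playMove σ τ s₀ n).2.price := by
  obtain ⟨hδ, ht⟩ := playMove_legal hG hσ hτ (histOf_valid hG hσ hτ hs₀ n) hf
  refine ⟨hδ, by rw [histOf_succ_last hf]; rfl, ?_⟩
  rw [accCost_histOf_succ hf, ht, zero_mul, add_zero]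

theorem valueLim_le_accCost_add (hG : G.IsUrgentSPTG r) (hσ : G.MinValid σ)
    (hν : ν ∈ Set.Icc 0 (G.M : ℝ)) (n : ℕ) :
    G.valueLim ν ℓ₀ ≤ (G.accCost (G.histOf σ (G.maxGreedy ν) (ℓ₀, ν) n) : EReal) +
      G.valueLim ν (G.histOf σ (G.maxGreedy ν) (ℓ₀, ν) n).last.1 := by
  induction n with
  | zero => simp [PTG.histOf, PTG.accCost, Hist.costFrom, Hist.last, Hist.lastFrom]
  | succ n ih =>
    set h := G.histOf σ (G.maxGreedy ν) (ℓ₀, ν) n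
    by_cases hf : G.owner h.last.1 = Owner.final
    · rwa [histOf_succ_of_final hf]
    obtain ⟨hδ, hlast, hacc⟩ := histOf_step hG hσ (hG.maxGreedy_valid ν) hν hf
    set δ := (G.playMove σ (G.maxGreedy ν) (ℓ₀, ν) n).2
    have hle : G.valueLim ν h.last.1 ≤ ((δ.price : ℝ) : EReal) + G.valueLim ν δ.tgt := by
      cases hown : G.owner h.last.1 with
      | final => exact absurd hown hf
      | min =>
        rw [valueLim_of_min hown]
        exact Finset.inf_le (f := fun δ => ((δ.price : ℝ) : EReal) + G.valueLim ν δ.tgt) hδ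
      | max =>
        have hδ' : δ = (G.maxGreedy ν h).2 := by simp only [δ, playMove_of_max hown]; rfl
        rw [hδ']
        exact (pickTrans_spec (hG.wf.exists_valueLim_eq_of_max hown)).2.le
    calc G.valueLim ν ℓ₀ ≤ (G.accCost h : EReal) + G.valueLim ν h.last.1 := ih
      _ ≤ (G.accCost h : EReal) + (((δ.price : ℝ) : EReal) + G.valueLim ν δ.tgt) := by gcongr
      _ = _ := by rw [hlast, hacc, EReal.coe_add, add_assoc]

theorem accCost_add_valueIter_le (hG : G.IsUrgentSPTG r) (hτ : G.MaxValid τ)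
    (hν : ν ∈ Set.Icc 0 (G.M : ℝ)) {N n : ℕ} (hn : n ≤ N) :
    (G.accCost (G.histOf (G.minCountdown ν N) τ (ℓ₀, ν) n) : EReal) +
      G.valueIter ν (N - n) (G.histOf (G.minCountdown ν N) τ (ℓ₀, ν) n).last.1 ≤
        G.valueIter ν N ℓ₀ := by
  induction n with
  | zero => simp [PTG.histOf, PTG.accCost, Hist.costFrom, Hist.last, Hist.lastFrom]
  | succ n ih =>
    set h := G.histOf (G.minCountdown ν N) τ (ℓ₀, ν) n
    by_cases hf : G.owner h.last.1 = Owner.final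
    · rw [histOf_succ_of_final hf, valueIter_of_final hf]
      simpa only [valueIter_of_final hf] using ih (by omega)
    obtain ⟨hδ, hlast, hacc⟩ := histOf_step hG (hG.minCountdown_valid ν N) hτ hν hf
    set δ := (G.playMove (G.minCountdown ν N) τ (ℓ₀, ν) n).2
    have hN : N - n = N - (n + 1) + 1 := by omega
    have hle : ((δ.price : ℝ) : EReal) + G.valueIter ν (N - (n + 1)) δ.tgt ≤
        G.valueIter ν (N - n) h.last.1 := by
      rw [hN]
      cases hown : G.owner h.last.1 with
      | final => exact absurd hown hf
      | min =>
        have hspec : G.valueIter ν (N - 1 - h.steps.length + 1) h.last.1 =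
            (((G.minCountdown ν N h).2.price : ℝ) : EReal) +
              G.valueIter ν (N - 1 - h.steps.length) (G.minCountdown ν N h).2.tgt :=
          (pickTrans_spec (hG.wf.exists_valueIter_succ_eq hf _)).2
        rw [histOf_length hf, show N - 1 - n = N - (n + 1) by omega] at hspec
        rw [show δ = (G.minCountdown ν N h).2 by simp only [δ, playMove_of_min hown]; rfl]
        exact hspec.ge
      | max =>
        rw [valueIter_succ_of_max hown]
        exact Finset.le_sup
          (f := fun δ => ((δ.price : ℝ) : EReal) + G.valueIter ν (N - (n + 1)) δ.tgt) hδ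
    calc _ = (G.accCost h : EReal) +
          (((δ.price : ℝ) : EReal) + G.valueIter ν (N - (n + 1)) δ.tgt) := by
            rw [hlast, hacc, EReal.coe_add, add_assoc]
      _ ≤ (G.accCost h : EReal) + G.valueIter ν (N - n) h.last.1 := by gcongr
      _ ≤ G.valueIter ν N ℓ₀ := ih (by omega)

theorem valueLim_le_playCost_maxGreedy (hG : G.IsUrgentSPTG r) (hσ : G.MinValid σ)
    (hν : ν ∈ Set.Icc 0 (G.M : ℝ)) :
    G.valueLim ν ℓ₀ ≤ G.playCost σ (G.maxGreedy ν) (ℓ₀, ν) := by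
  by_cases hex : ∃ n, G.owner (G.histOf σ (G.maxGreedy ν) (ℓ₀, ν) n).last.1 = Owner.final
  · have h := valueLim_le_accCost_add (ℓ₀ := ℓ₀) hG hσ hν (Nat.find hex)
    rw [valueLim_of_final (Nat.find_spec hex), ← EReal.coe_add] at h
    rw [PTG.playCost, dif_pos hex,
      histOf_last_snd (s₀ := (ℓ₀, ν)) hG hσ (hG.maxGreedy_valid ν) hν]
    exact h
  · rw [PTG.playCost, dif_neg hex]
    exact le_top

theorem playCost_minCountdown_le (hG : G.IsUrgentSPTG r) (hτ : G.MaxValid τ)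
    (hν : ν ∈ Set.Icc 0 (G.M : ℝ)) (N : ℕ) :
    G.playCost (G.minCountdown ν N) τ (ℓ₀, ν) ≤ G.valueIter ν N ℓ₀ := by
  by_cases htop : G.valueIter ν N ℓ₀ = ⊤
  · exact htop ▸ le_top
  have hN : G.owner (G.histOf (G.minCountdown ν N) τ (ℓ₀, ν) N).last.1 = Owner.final := by
    by_contra hf
    have h := accCost_add_valueIter_le (ℓ₀ := ℓ₀) hG hτ hν (le_refl N)
    rw [Nat.sub_self, valueIter_zero_of_ne_final hf, EReal.coe_add_top, top_le_iff] at h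
    exact htop h
  have hex : ∃ n,
      G.owner (G.histOf (G.minCountdown ν N) τ (ℓ₀, ν) n).last.1 = Owner.final := ⟨N, hN⟩
  have h := accCost_add_valueIter_le (ℓ₀ := ℓ₀) hG hτ hν (Nat.find_min' hex hN)
  rw [valueIter_of_final (Nat.find_spec hex), ← EReal.coe_add] at h
  rw [PTG.playCost, dif_pos hex,
    histOf_last_snd (s₀ := (ℓ₀, ν)) hG (hG.minCountdown_valid ν N) hτ hν]
  exact h

theorem val_eq_valueLim (hG : G.IsUrgentSPTG r) (hν : ν ∈ Set.Icc 0 (G.M : ℝ)) :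
    G.val (ℓ₀, ν) = G.valueLim ν ℓ₀ :=
  le_antisymm
    (iSup_le fun τ => le_iInf fun N => iInf_le_of_le ⟨_, hG.minCountdown_valid ν N⟩
      (playCost_minCountdown_le hG τ.2 hν N))
    (le_iSup_of_le ⟨_, hG.maxGreedy_valid ν⟩ <| le_iInf fun σ =>
      valueLim_le_playCost_maxGreedy hG σ.2 hν)

theorem val_of_final (hG : G.IsUrgentSPTG r) (hℓ₀ : G.owner ℓ₀ = Owner.final) :
    G.val (ℓ₀, ν) = G.fcost ℓ₀ ν := by
  have hcost (σ τ : StratFun G.Loc) : G.playCost σ τ (ℓ₀, ν) = G.fcost ℓ₀ ν := by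
    have hex : ∃ n, G.owner (G.histOf σ τ (ℓ₀, ν) n).last.1 = Owner.final :=
      ⟨0, hℓ₀⟩
    rw [PTG.playCost, dif_pos hex, (Nat.find_eq_zero hex).2 hℓ₀]
    simp [PTG.histOf, PTG.accCost, Hist.costFrom, Hist.last, Hist.lastFrom]
  have : Nonempty {σ // G.MinValid σ} := ⟨⟨_, hG.minCountdown_valid ν 0⟩⟩
  have : Nonempty {τ // G.MaxValid τ} := ⟨⟨_, hG.maxGreedy_valid ν⟩⟩
  simp [PTG.val, PTG.lval, PTG.maxValue, hcost]

end PTG.IsUrgentSPTG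

theorem PTG.mem_FF_of_abs_le {G : PTG} {f : G.Loc} {k : ℤ} (hf : G.owner f = Owner.final)
    (hk : |k| ≤ ((G.nLoc : ℤ) - 1) * (G.PT : ℤ)) : (fun ν => k + G.fcost f ν) ∈ G.FF := by
  refine ⟨f, k, hf, by linarith [neg_abs_le k], ?_, rfl⟩
  linarith [le_abs_self k, Int.natCast_nonneg G.PT]

/-- Lemma 9: in an `r`-SPTG with only urgent (non-final) locations,
every finite value `Val_G(ℓ, ν)` is realized by some function of `F_G`. -/
theorem urgent_sptg_val_in_FF (G : PTG) (hwf : G.WF) (r : ℚ) (hsptg : G.IsSPTG (r : ℝ))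
    (hurg : ∀ ℓ : G.Loc, G.owner ℓ ≠ Owner.final → G.urgent ℓ = true)
    (ℓ : G.Loc) (ν : ℝ) (h0 : 0 ≤ ν) (hν : ν ≤ (r : ℝ))
    (x : ℝ) (hx : G.val (ℓ, ν) = (x : EReal)) :
    ∃ f ∈ G.FF, x = f ν := by
  have hG : G.IsUrgentSPTG r := ⟨hwf, hsptg, hurg⟩
  have hlim : G.valueLim ν ℓ = x := by
    rw [← hx]
    by_cases hℓ : G.owner ℓ = Owner.final
    · rw [hG.val_of_final hℓ, PTG.valueLim_of_final hℓ]
    · exact (hG.val_eq_valueLim ⟨h0, hν.trans (hG.sptg.M_eq hG.wf ⟨ℓ, hℓ⟩).ge⟩).symm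
  obtain ⟨f, k, hf, hk, rfl⟩ := hwf.exists_eq_int_add_fcost hlim
  exact ⟨_, PTG.mem_FF_of_abs_le hf hk, rfl⟩

end PTGPaper
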